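/- Let U = {1, …, u} be a universe, 𝒮 a family of nonempty subsets of U, and κ ∈ ℕ. Construct the training data set over features d_1, …, d_u: for each i ∈ U, one blue universe example with value −1 in d_i and value 1 in all other features; for each S ∈ 𝒮, κ + 1 copies of a red example with value 0 in d_i for i ∈ S and value 1 in d_i for i ∉ S; and κ + 1 copies of a blue example with value 1 in every feature. Let T be the decision tree whose cuts c_1, …, c_u form a path, where c_i has feature d_i and threshold −1/2, the left child of every c_i is a leaf labeled red, the right child of c_i is c_{i+1} for i < u, and the right child of c_u is a leaf labeled blue. Then there exists H ⊆ U with |H| ≤ κ such that H ∩ S ≠ ∅ for every S ∈ 𝒮 if and only if the Threshold Adjustment instance ((E, λ), T, u, κ) is a yes-instance. -/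

import Mathlib

/-
A hitting set `H` yields a yes-certificate by moving the thresholds of its cuts to `0` and all
others to `-2`; then exactly the universe examples of `H` are misclassified. Conversely, an adjusted
tree is again a path of cuts over the features. With at most `κ` errors it must classify the
all-ones example blue and every set example red, since each comes in `κ + 1` copies. The first cut
that sends the example of `S` left has a feature `i ∈ S`, and the universe example of `i` reaches
that cut too and also goes left, as it agrees with the all-ones example on all other features.
So the misclassified universe examples form a hitting set of size at most `κ`.
-/

/-- The two class labels. -/
def blue : Bool := true

def red : Bool := false

/-- Decision trees with features of type `α`: each leaf carries a class label,
each internal node (a *cut*) carries a feature and a real threshold. -/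
inductive DTree (α : Type) : Type
  | leaf (label : Bool) : DTree α
  | node (feat : α) (thr : ℝ) (left right : DTree α) : DTree α

namespace DTree

/-- The class that the tree assigns to the example `e`. -/
noncomputable def classify {α : Type} : DTree α → (α → ℝ) → Bool
  | leaf c, _ => c
  | node f x l r, e => if e f ≤ x then l.classify e else r.classify e

end DTree

/-- The number of errors of `T` on the training data set `(E, lab)`. -/
noncomputable def errorCount {α ι : Type} [Fintype ι] (E : ι → α → ℝ)
    (lab : ι → Bool) (T : DTree α) : ℕ :=
  (Finset.univ.filter (fun i => T.classify (E i) ≠ lab i)).card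

/-- `T'` has the same shape as `T` and the same feature at every cut; thresholds and
leaf labels may differ. -/
def SameShapeFeat {α : Type} : DTree α → DTree α → Prop
  | DTree.leaf _, DTree.leaf _ => True
  | DTree.node f _ l r, DTree.node f' _ l' r' =>
      f = f' ∧ SameShapeFeat l l' ∧ SameShapeFeat r r'
  | _, _ => False

/-- The number of cuts at which the thresholds of the two (same-shaped) trees
differ. -/
noncomputable def adjCost {α : Type} : DTree α → DTree α → ℕ
  | DTree.node _ x l r, DTree.node _ x' l' r' =>
      (if x = x' then 0 else 1) + adjCost l l' + adjCost r r'
  | _, _ => 0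

/-- The Threshold Adjustment instance `((E, lab), T, k, t)` is a yes-instance. -/
def TAYes {α ι : Type} [Fintype ι] (E : ι → α → ℝ) (lab : ι → Bool)
    (T : DTree α) (k t : ℕ) : Prop :=
  ∃ T' : DTree α, SameShapeFeat T T' ∧ adjCost T T' ≤ k ∧ errorCount E lab T' ≤ t

/-- The path-shaped decision tree whose cuts use the listed features (in order), all
with threshold `thr`; the left child of every cut is a red leaf, the right child of
the last cut is a blue leaf. -/
def chainTree {α : Type} (thr : ℝ) : List α → DTree α
  | [] => DTree.leaf blue
  | f :: fs => DTree.node f thr (DTree.leaf red) (chainTree thr fs)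

open DTree

section CutChain

variable {α : Type}

def cutChain : List (α × ℝ × Bool) → Bool → DTree α
  | [], b => leaf b
  | (f, x, c) :: d, b => node f x (leaf c) (cutChain d b)

@[simp]
lemma classify_cutChain_nil (b : Bool) (e : α → ℝ) : (cutChain [] b).classify e = b := rfl

@[simp]
lemma classify_cutChain_cons (f : α) (x : ℝ) (c : Bool) (d : List (α × ℝ × Bool)) (b : Bool)
    (e : α → ℝ) :
    (cutChain ((f, x, c) :: d) b).classify e = if e f ≤ x then c else (cutChain d b).classify e :=
  rfl

lemma sameShapeFeat_chainTree_cutChain (thr : ℝ) (d : List (α × ℝ × Bool)) (b : Bool) :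
    SameShapeFeat (chainTree thr (d.map Prod.fst)) (cutChain d b) := by
  induction d with
  | nil => trivial
  | cons p d ih => exact ⟨rfl, trivial, ih⟩

lemma sameShapeFeat_chainTree_iff {thr : ℝ} {l : List α} {T : DTree α} :
    SameShapeFeat (chainTree thr l) T ↔ ∃ d b, T = cutChain d b ∧ d.map Prod.fst = l := by
  refine ⟨fun h => ?_, fun ⟨d, b, hT, hd⟩ => hd ▸ hT ▸ sameShapeFeat_chainTree_cutChain thr d b⟩
  induction l generalizing T with
  | nil =>
    cases T with
    | leaf b => exact ⟨[], b, rfl, rfl⟩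
    | node => exact h.elim
  | cons f fs ih =>
    cases T with
    | leaf => exact h.elim
    | node f' x l r =>
      obtain ⟨rfl, hl, hr⟩ := h
      cases l with
      | leaf c =>
        obtain ⟨d, b, rfl, rfl⟩ := ih hr
        exact ⟨(f, x, c) :: d, b, rfl, rfl⟩
      | node => exact hl.elim

lemma adjCost_chainTree_le_length (thr : ℝ) (l : List α) (T : DTree α) :
    adjCost (chainTree thr l) T ≤ l.length := by
  induction l generalizing T with
  | nil => cases T <;> simp [chainTree, adjCost]
  | cons f fs ih =>
    cases T with
    | leaf => simp [chainTree, adjCost]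
    | node f' x l r =>
      have := ih r
      simp only [chainTree, adjCost, List.length_cons]
      split <;> omega

lemma classify_cutChain_congr {d : List (α × ℝ × Bool)} {e e' : α → ℝ}
    (h : ∀ f ∈ d.map Prod.fst, e f = e' f) (b : Bool) :
    (cutChain d b).classify e = (cutChain d b).classify e' := by
  induction d with
  | nil => rfl
  | cons p d ih =>
    obtain ⟨f, x, c⟩ := p
    simp only [List.map_cons, List.mem_cons, forall_eq_or_imp] at h
    simp only [classify_cutChain_cons, h.1, ih h.2]

lemma classify_redChain_eq_blue_iff (t : α → ℝ) (l : List α) (e : α → ℝ) :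
    (cutChain (l.map fun f => (f, t f, red)) blue).classify e = blue ↔ ∀ f ∈ l, t f < e f := by
  induction l with
  | nil => simp
  | cons f l ih =>
    by_cases hf : e f ≤ t f
    · simp [hf, red, blue]
    · simp [hf, ih, lt_of_not_ge hf]

lemma classify_redChain_eq_red_iff (t : α → ℝ) (l : List α) (e : α → ℝ) :
    (cutChain (l.map fun f => (f, t f, red)) blue).classify e = red ↔ ∃ f ∈ l, e f ≤ t f := by
  simpa [red, blue] using (classify_redChain_eq_blue_iff t l e).not

variable [DecidableEq α]

lemma exists_mem_classify_eq_red {S : Finset α} {b : Bool} {d : List (α × ℝ × Bool)}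
    (hd : (d.map Prod.fst).Nodup) (hone : (cutChain d b).classify (fun _ => 1) = blue)
    (hS : (cutChain d b).classify (fun j => if j ∈ S then 0 else 1) = red) :
    ∃ i ∈ S, (cutChain d b).classify (fun j => if j = i then -1 else 1) = red := by
  induction d with
  | nil => simp_all [blue, red]
  | cons p d ih =>
    obtain ⟨f, x, c⟩ := p
    simp only [List.map_cons, List.nodup_cons] at hd
    simp only [classify_cutChain_cons] at hone hS ⊢
    by_cases hSleft : (if f ∈ S then (0 : ℝ) else 1) ≤ x
    · rw [if_pos hSleft] at hS
      by_cases hfS : f ∈ S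
      · rw [if_pos hfS] at hSleft
        exact ⟨f, hfS, by simp [show (-1 : ℝ) ≤ x by linarith, hS]⟩
      · rw [if_neg hfS] at hSleft
        simp_all [blue, red]
    · have hx : ¬ (1 : ℝ) ≤ x := by split_ifs at hSleft <;> linarith
      rw [if_neg hSleft] at hS
      rw [if_neg hx] at hone
      obtain ⟨i, hiS, hi⟩ := ih hd.2 hone hS
      have hfi : f ≠ i := by
        rintro rfl
        rw [classify_cutChain_congr (e' := fun _ => 1) (fun g hg => if_neg (by grind)), hone] at hi
        simp [blue, red] at hi
      exact ⟨i, hiS, by simp [hfi, hx, hi]⟩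

end CutChain

section ErrorCount

variable {α ι β : Type} [Fintype ι] {E : ι → α → ℝ} {lab : ι → Bool} {T : DTree α}

lemma card_le_errorCount {s : Finset β} {g : β → ι} (hg : g.Injective)
    (herr : ∀ b ∈ s, T.classify (E (g b)) ≠ lab (g b)) : s.card ≤ errorCount E lab T :=
  Finset.card_le_card_of_injOn g (fun b hb => by simpa using herr b hb) hg.injOn

lemma errorCount_le_card (s : Finset β) (g : β → ι)
    (herr : ∀ i, T.classify (E i) ≠ lab i → ∃ b ∈ s, g b = i) : errorCount E lab T ≤ s.card :=
  Finset.card_le_card_of_surjOn g fun i hi => herr i (by simpa using hi)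

lemma classify_eq_of_copies {k : ℕ} (herr : errorCount E lab T ≤ k) {g : Fin (k + 1) → ι}
    (hg : g.Injective) {e : α → ℝ} {c : Bool} (hE : ∀ j, E (g j) = e) (hlab : ∀ j, lab (g j) = c) :
    T.classify e = c := by
  by_contra h
  have := card_le_errorCount (E := E) (lab := lab) (s := Finset.univ) hg fun j _ => by
    rwa [hE j, hlab j]
  simp only [Finset.card_univ, Fintype.card_fin] at this
  omega

end ErrorCount

section HittingSetReduction

variable {α : Type} [Fintype α] [DecidableEq α] (𝒮 : Finset (Finset α)) (κ : ℕ)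

def hittingSetExamples :
    α ⊕ ({S : Finset α // S ∈ 𝒮} × Fin (κ + 1)) ⊕ Fin (κ + 1) → α → ℝ :=
  Sum.elim (fun i j => if j = i then -1 else 1)
    (Sum.elim (fun Sc j => if j ∈ Sc.1.1 then 0 else 1) (fun _ _ => 1))

def hittingSetLabels : α ⊕ ({S : Finset α // S ∈ 𝒮} × Fin (κ + 1)) ⊕ Fin (κ + 1) → Bool :=
  Sum.elim (fun _ => blue) (Sum.elim (fun _ => red) (fun _ => blue))

variable {𝒮 κ}

lemma taYes_of_hittingSet {l : List α} (hl : ∀ a, a ∈ l) {H : Finset α} (hH : H.card ≤ κ)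
    (hhit : ∀ S ∈ 𝒮, (H ∩ S).Nonempty) :
    TAYes (hittingSetExamples 𝒮 κ) (hittingSetLabels 𝒮 κ) (chainTree (-1/2) l) l.length κ := by
  set t : α → ℝ := fun i => if i ∈ H then 0 else -2
  have ht : ∀ f, t f < 1 := fun f => by simp only [t]; split_ifs <;> norm_num
  refine ⟨cutChain (l.map fun f => (f, t f, red)) blue,
    sameShapeFeat_chainTree_iff.mpr ⟨_, _, rfl, by simp [Function.comp_def]⟩,
    adjCost_chainTree_le_length _ _ _, (errorCount_le_card H Sum.inl ?_).trans hH⟩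
  rintro (i | ⟨S, _⟩ | _) herr
  · refine ⟨i, ?_, rfl⟩
    by_contra hi
    refine herr ((classify_redChain_eq_blue_iff t l _).mpr fun f _ => ?_)
    by_cases hfi : f = i
    · simp [hittingSetExamples, t, hfi, hi]
    · simpa [hittingSetExamples, hfi] using ht f
  · refine (herr ?_).elim
    obtain ⟨j, hj⟩ := hhit S.1 S.2
    rw [Finset.mem_inter] at hj
    exact (classify_redChain_eq_red_iff t l _).mpr
      ⟨j, hl j, by simp [hittingSetExamples, t, hj.1, hj.2]⟩
  · exact (herr ((classify_redChain_eq_blue_iff t l _).mpr fun f _ => ht f)).elim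

lemma exists_hittingSet_of_taYes {l : List α} (hl : l.Nodup) {k : ℕ}
    (h : TAYes (hittingSetExamples 𝒮 κ) (hittingSetLabels 𝒮 κ) (chainTree (-1/2) l) k κ) :
    ∃ H : Finset α, H.card ≤ κ ∧ ∀ S ∈ 𝒮, (H ∩ S).Nonempty := by
  obtain ⟨T, hshape, -, herr⟩ := h
  obtain ⟨d, b, rfl, rfl⟩ := sameShapeFeat_chainTree_iff.mp hshape
  refine ⟨Finset.univ.filter fun i =>
      (cutChain d b).classify (fun j => if j = i then -1 else 1) = red,
    (card_le_errorCount Sum.inl_injective fun i hi => ?_).trans herr, fun S hS => ?_⟩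
  · simpa [hittingSetExamples, hittingSetLabels, red, blue] using (Finset.mem_filter.mp hi).2
  have hone := classify_eq_of_copies herr (g := fun j => Sum.inr (Sum.inr j))
    (fun _ _ h => by simpa using h) (fun _ => rfl) (fun _ => rfl)
  have hS := classify_eq_of_copies herr (g := fun j => Sum.inr (Sum.inl (⟨S, hS⟩, j)))
    (e := fun j => if j ∈ S then 0 else 1) (fun _ _ h => by simpa using h) (fun _ => rfl)
    (fun _ => rfl)
  obtain ⟨i, hiS, hi⟩ := exists_mem_classify_eq_red hl hone hS
  exact ⟨i, by simp [hi, hiS]⟩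

end HittingSetReduction

theorem stmt13_general (u : ℕ) (𝒮 : Finset (Finset (Fin u))) (κ : ℕ) :
    (∃ H : Finset (Fin u), H.card ≤ κ ∧ ∀ S ∈ 𝒮, (H ∩ S).Nonempty) ↔
    TAYes (ι := Fin u ⊕ ({S : Finset (Fin u) // S ∈ 𝒮} × Fin (κ + 1)) ⊕ Fin (κ + 1))
      (Sum.elim (fun i' (j : Fin u) => if j = i' then (-1 : ℝ) else 1)
        (Sum.elim (fun Sc (j : Fin u) => if j ∈ Sc.1.1 then (0 : ℝ) else 1)
          (fun _ (_ : Fin u) => 1)))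
      (Sum.elim (fun _ => blue) (Sum.elim (fun _ => red) (fun _ => blue)))
      (chainTree (-1/2) (List.finRange u)) u κ := by
  refine ⟨fun ⟨H, hH, hhit⟩ => ?_, exists_hittingSet_of_taYes (List.nodup_finRange u)⟩
  have := taYes_of_hittingSet (𝒮 := 𝒮) List.mem_finRange hH hhit
  rwa [List.length_finRange] at this

/-- Hitting-set reduction with parameter `t`. Examples: for each
`i ∈ U` one blue universe example (value `−1` in `d_i`, `1` elsewhere); for each
`S ∈ 𝒮`, `κ + 1` copies of a red example (value `0` on `S`, `1` elsewhere); and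
`κ + 1` copies of a blue example with all values `1`. The tree is the path of cuts
`c_1, …, c_u`, where `c_i` has feature `d_i` and threshold `−1/2`. Then a hitting set
of size at most `κ` exists if and only if `((E, λ), T, u, κ)` is a yes-instance of
Threshold Adjustment. -/
theorem stmt13 (u : ℕ) (𝒮 : Finset (Finset (Fin u))) (h𝒮 : ∀ S ∈ 𝒮, S.Nonempty)
    (κ : ℕ) :
    (∃ H : Finset (Fin u), H.card ≤ κ ∧ ∀ S ∈ 𝒮, (H ∩ S).Nonempty) ↔
    TAYes (ι := Fin u ⊕ ({S : Finset (Fin u) // S ∈ 𝒮} × Fin (κ + 1)) ⊕ Fin (κ + 1))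
      (Sum.elim (fun i' (j : Fin u) => if j = i' then (-1 : ℝ) else 1)
        (Sum.elim (fun Sc (j : Fin u) => if j ∈ Sc.1.1 then (0 : ℝ) else 1)
          (fun _ (_ : Fin u) => 1)))
      (Sum.elim (fun _ => blue) (Sum.elim (fun _ => red) (fun _ => blue)))
      (chainTree (-1/2) (List.finRange u)) u κ :=
  stmt13_general u 𝒮 κ
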